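/- Let x, y ∈ ℤ^N_>, let σ be a permutation of {1,…,N} such that the product ∏_{i=1}^N F_{σ(i)−i}(x_i − y_{σ(i)}, 1) is nonzero, and let (i_1,…,i_k) with k ≥ 2 be a cycle of σ (so σ(i_1)=i_2, …, σ(i_{k−1})=i_k, σ(i_k)=i_1). Then, after a cyclic relabeling of (i_1,…,i_k), the cycle consists of consecutive indices i_j = i_1 + j − 1 for j = 1,…,k, and the coordinates satisfy y_{i_1} = x_{i_1} and x_{i_j} = y_{i_j} = x_{i_1} − (j−1) for j = 2,…,k. -/
import Mathlib


/-- `F_n(x,t) = (1/2πi) ∮_{|w|=r} (q+p/w)^t (1-w)^{-n} w^{x-1} dw` for `t ≥ 0`, `0` for `t < 0`. -/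
noncomputable def F (p r : ℝ) (n x t : ℤ) : ℂ :=
  if 0 ≤ t then
    (2 * Real.pi * Complex.I)⁻¹ *
      ∮ w in C(0, r), ((1 - p : ℂ) + (p : ℂ) / w) ^ t * (1 - w) ^ (-n) * w ^ (x - 1)
  else 0

open Complex Metric Set

/-- circle integral of a finite sum, given integrability of each term. -/
lemma circleIntegral_finset_sum {ι : Type*} (s : Finset ι) (f : ι → ℂ → ℂ) (c : ℂ) (R : ℝ)
    (h : ∀ i ∈ s, CircleIntegrable (f i) c R) :
    (∮ z in C(c, R), ∑ i ∈ s, f i z) = ∑ i ∈ s, ∮ z in C(c, R), f i z := by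
  simp only [circleIntegral]
  rw [← intervalIntegral.integral_finset_sum (fun i hi => (h i hi).out)]
  congr 1
  ext θ
  rw [Finset.smul_sum]

lemma circleIntegral_add' {f g : ℂ → ℂ} {c : ℂ} {R : ℝ} (hf : CircleIntegrable f c R)
    (hg : CircleIntegrable g c R) :
    (∮ z in C(c, R), (f z + g z)) = (∮ z in C(c, R), f z) + ∮ z in C(c, R), g z := by
  simp only [circleIntegral]
  rw [← intervalIntegral.integral_add hf.out hg.out]
  congr 1
  ext θ
  rw [smul_add]

lemma circleIntegral_const_zpow (r : ℝ) (a : ℂ) (e : ℤ) (he : e ≠ -1) :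
    (∮ z in C(0, r), a * z ^ e) = 0 := by
  have h2 : (∮ z in C((0:ℂ), r), z ^ e) = 0 := by
    simpa using circleIntegral.integral_sub_zpow_of_ne he 0 0 r
  rw [circleIntegral.integral_const_mul, h2, mul_zero]

lemma circleIntegrable_const_zpow {r : ℝ} (hr : 0 < r) (a : ℂ) (e : ℤ) :
    CircleIntegrable (fun z => a * z ^ e) 0 r := by
  apply ContinuousOn.circleIntegrable hr.le
  apply continuousOn_const.mul
  apply ContinuousOn.zpow₀ continuousOn_id
  intro z hz
  left
  simp only [mem_sphere_iff_norm, sub_zero] at hz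
  intro h0
  have h0' : z = 0 := h0
  rw [h0', norm_zero] at hz
  exact hr.ne' hz.symm

/-- `F p r n m 1 = 0` whenever `m ≥ 2`: the integrand is holomorphic in the unit disk. -/
lemma F_one_zero_big (p r : ℝ) (hr0 : 0 < r) (hr1 : r < 1) {n m : ℤ} (hm : 2 ≤ m) :
    F p r n m 1 = 0 := by
  rw [F, if_pos (by norm_num : (0:ℤ) ≤ 1)]
  apply mul_eq_zero_of_right
  have hcongr : (∮ w in C((0:ℂ), r), ((1 - p : ℂ) + (p : ℂ) / w) ^ (1:ℤ) * (1 - w) ^ (-n) * w ^ (m - 1))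
      = ∮ w in C((0:ℂ), r), ((1 - p : ℂ) * w + p) * (1 - w) ^ (-n) * w ^ (m - 2) := by
    apply circleIntegral.integral_congr hr0.le
    intro w hw
    have hw0 : w ≠ 0 := by
      intro h0
      rw [mem_sphere_iff_norm, sub_zero, h0, norm_zero] at hw
      exact hr0.ne' hw.symm
    have hsplit : w ^ (m - 1) = w ^ (m - 2) * w := by
      rw [show m - 1 = (m - 2) + 1 by ring, zpow_add_one₀ hw0]
    have key : ((1 - p : ℂ) + (p : ℂ)/w) * w = (1-p)*w + p := by field_simp
    calc ((1 - p : ℂ) + (p : ℂ)/w) ^ (1:ℤ) * (1-w)^(-n) * w ^ (m-1)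
        = (((1 - p : ℂ) + (p : ℂ)/w) * w) * (1-w)^(-n) * w^(m-2) := by
          rw [zpow_one, hsplit]; ring
      _ = _ := by rw [key]
  rw [hcongr]
  apply circleIntegral_eq_zero_of_differentiable_on_off_countable hr0.le Set.countable_empty
  case hd =>
    intro z hz
    have hz1 : (1 : ℂ) - z ≠ 0 := by
      intro hcon
      have hz1' : z = 1 := by linear_combination -hcon
      have := hz.1
      rw [mem_ball, dist_zero_right, hz1', norm_one] at this
      linarith
    apply DifferentiableAt.mul
    · apply DifferentiableAt.mul
      · exact (differentiableAt_id.const_mul _).add_const _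
      · exact ((differentiableAt_const _).sub differentiableAt_id).zpow (Or.inl hz1)
    · exact differentiableAt_zpow.mpr (Or.inr (by omega))
  case hc =>
    intro z hz
    have hz1 : (1 : ℂ) - z ≠ 0 := by
      intro hcon
      have hz1' : z = 1 := by linear_combination -hcon
      rw [mem_closedBall, dist_zero_right, hz1', norm_one] at hz
      linarith
    apply ContinuousAt.continuousWithinAt
    apply DifferentiableAt.continuousAt (𝕜 := ℂ)
    apply DifferentiableAt.mul
    · apply DifferentiableAt.mul
      · exact (differentiableAt_id.const_mul _).add_const _
      · exact ((differentiableAt_const _).sub differentiableAt_id).zpow (Or.inl hz1)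
    · exact differentiableAt_zpow.mpr (Or.inr (by omega))

/-- `F p r n m 1 = 0` whenever `n ≤ 0` and `m < n`: the integrand is a Laurent polynomial
with all exponents `< -1`. -/
lemma F_one_zero_neg (p r : ℝ) (hr0 : 0 < r) {n m : ℤ} (hn : n ≤ 0) (hm : m < n) :
    F p r n m 1 = 0 := by
  rw [F, if_pos (by norm_num : (0:ℤ) ≤ 1)]
  apply mul_eq_zero_of_right
  set d : ℕ := (-n).toNat with hdd
  have hd : (-n : ℤ) = (d : ℤ) := (Int.toNat_of_nonneg (by omega)).symm
  have hcongr : (∮ w in C((0:ℂ), r), ((1 - p : ℂ) + (p : ℂ) / w) ^ (1:ℤ) * (1 - w) ^ (-n) * w ^ (m - 1))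
      = ∮ w in C((0:ℂ), r), ∑ t ∈ Finset.range (d + 1),
          (((1 - p : ℂ) * ((d.choose t : ℂ) * (-1) ^ t)) * w ^ ((t : ℤ) + m - 1)
            + ((p : ℂ) * ((d.choose t : ℂ) * (-1) ^ t)) * w ^ ((t : ℤ) + m - 2)) := by
    apply circleIntegral.integral_congr hr0.le
    intro w hw
    have hw0 : w ≠ 0 := by
      intro h0
      rw [mem_sphere_iff_norm, sub_zero, h0, norm_zero] at hw
      exact hr0.ne' hw.symm
    have hexpand : ((1:ℂ) - w) ^ (-n) = ∑ t ∈ Finset.range (d + 1),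
        ((-1) ^ t * (d.choose t : ℂ)) * w ^ (t : ℕ) := by
      rw [hd, zpow_natCast, sub_eq_add_neg, add_comm, add_pow]
      refine Finset.sum_congr rfl fun t ht => ?_
      rw [neg_pow]
      ring
    simp only [zpow_one, hexpand, Finset.mul_sum, Finset.sum_mul]
    refine Finset.sum_congr rfl fun t ht => ?_
    have hpow1 : w ^ ((t : ℤ) + m - 1) = w ^ (t : ℕ) * w ^ (m - 1) := by
      rw [show (t : ℤ) + m - 1 = (t : ℤ) + (m - 1) by ring, zpow_add₀ hw0, zpow_natCast]
    have hpow2 : w ^ ((t : ℤ) + m - 2) = w ^ (t : ℕ) * w ^ (m - 1) * w⁻¹ := by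
      rw [show (t : ℤ) + m - 2 = ((t : ℤ) + (m - 1)) + (-1) by ring, zpow_add₀ hw0,
        zpow_add₀ hw0, zpow_natCast, zpow_neg_one]
    rw [hpow1, hpow2, div_eq_mul_inv]
    ring
  rw [hcongr]
  rw [circleIntegral_finset_sum (Finset.range (d + 1))
      (fun t w => (((1 - p : ℂ) * ((d.choose t : ℂ) * (-1) ^ t)) * w ^ ((t : ℤ) + m - 1)
        + ((p : ℂ) * ((d.choose t : ℂ) * (-1) ^ t)) * w ^ ((t : ℤ) + m - 2))) 0 r
      (fun t _ => (circleIntegrable_const_zpow hr0 _ _).add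
        (circleIntegrable_const_zpow hr0 _ _))]
  apply Finset.sum_eq_zero
  intro t ht
  have ht' : (t : ℤ) ≤ (d : ℤ) := by
    have := Finset.mem_range.mp ht
    omega
  rw [circleIntegral_add' (circleIntegrable_const_zpow hr0 _ _) (circleIntegrable_const_zpow hr0 _ _),
    circleIntegral_const_zpow r _ _ (by omega), circleIntegral_const_zpow r _ _ (by omega), add_zero]

/-- Quantitative version of strict antitonicity for integer-valued sequences on `Fin N`. -/
lemma strictAnti_quant {N : ℕ} {x : Fin N → ℤ} (hx : StrictAnti x) (i j : Fin N)
    (hij : (i : ℕ) ≤ (j : ℕ)) : x j + ((j : ℕ) : ℤ) ≤ x i + ((i : ℕ) : ℤ) := by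
  obtain ⟨d, hd⟩ : ∃ d, (j : ℕ) = (i : ℕ) + d := ⟨(j : ℕ) - (i : ℕ), by omega⟩
  clear hij
  induction d generalizing j with
  | zero =>
    have : i = j := Fin.ext (by omega)
    subst this
    exact le_refl _
  | succ d ih =>
    have hjN : (i : ℕ) + d < N := by have := j.isLt; omega
    have h1 := ih ⟨(i : ℕ) + d, hjN⟩ rfl
    have h2 : x j < x (⟨(i : ℕ) + d, hjN⟩ : Fin N) := by
      apply hx
      rw [Fin.lt_def]
      simp only []
      omega
    simp only [] at h1
    omega

lemma zmod_natCast_inj {k : ℕ} [NeZero k] {s t : ℕ} (hs : s < k) (ht : t < k)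
    (h : (s : ZMod k) = t) : s = t := by
  have := congrArg ZMod.val h
  rwa [ZMod.val_natCast_of_lt hs, ZMod.val_natCast_of_lt ht] at this

/-- Lemma (cycles), part 2: for `x, y ∈ ℤ^N_>`, a permutation `σ` with
`∏_i F_{σ(i)-i}(x_i - y_{σ(i)}, 1) ≠ 0`, and a cycle `(i_1,…,i_k)` of `σ` of length
`k ≥ 2` (encoded as an injective map `c : ZMod k → Fin N` with `σ(c j) = c (j+1)`),
there is a cyclic relabeling (a shift `m`) after which the cycle consists of
consecutive indices `i_j = i_1 + (j-1)` and the coordinates satisfy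
`y_{i_1} = x_{i_1}` and `x_{i_j} = y_{i_j} = x_{i_1} - (j-1)`. -/
theorem F_product_one_time_cycles (p r : ℝ) (hp : 0 < p) (hp1 : p < 1)
    (hr0 : 0 < r) (hr1 : r < 1) {N : ℕ} (x y : Fin N → ℤ)
    (hx : StrictAnti x) (hy : StrictAnti y) (σ : Equiv.Perm (Fin N))
    (h : ∏ i : Fin N,
        F p r (((σ i : ℕ) : ℤ) - ((i : ℕ) : ℤ)) (x i - y (σ i)) 1 ≠ 0)
    (k : ℕ) (hk : 2 ≤ k) (c : ZMod k → Fin N) (hc : Function.Injective c)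
    (hcyc : ∀ j : ZMod k, σ (c j) = c (j + 1)) :
    ∃ m : ZMod k, ∀ j : Fin k,
      ((c (m + ((j : ℕ) : ZMod k)) : ℕ) = (c m : ℕ) + (j : ℕ)) ∧
      x (c (m + ((j : ℕ) : ZMod k))) = x (c m) - ((j : ℕ) : ℤ) ∧
      y (c (m + ((j : ℕ) : ZMod k))) = x (c (m + ((j : ℕ) : ZMod k))) := by
  haveI : NeZero k := ⟨by omega⟩
  -- each factor is nonzero
  have hfac : ∀ i : Fin N, F p r (((σ i : ℕ) : ℤ) - ((i : ℕ) : ℤ)) (x i - y (σ i)) 1 ≠ 0 :=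
    fun i => Finset.prod_ne_zero_iff.mp h i (Finset.mem_univ i)
  have hA : ∀ i : Fin N, x i - y (σ i) ≤ 1 := by
    intro i
    by_contra hcon
    push_neg at hcon
    exact hfac i (F_one_zero_big p r hr0 hr1 (by omega))
  have hB : ∀ i : Fin N, ((σ i : ℕ) : ℤ) < ((i : ℕ) : ℤ) →
      ((σ i : ℕ) : ℤ) - ((i : ℕ) : ℤ) ≤ x i - y (σ i) := by
    intro i hlt
    by_contra hcon
    push_neg at hcon
    exact hfac i (F_one_zero_neg p r hr0 (by omega) (by omega))
  -- pick the cycle element with minimal index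
  obtain ⟨m, -, hminm⟩ := Finset.exists_min_image (Finset.univ : Finset (ZMod k))
    (fun j => (c j : ℕ)) ⟨0, Finset.mem_univ 0⟩
  have hmin : ∀ j : ZMod k, (c m : ℕ) ≤ (c j : ℕ) := fun j => hminm j (Finset.mem_univ j)
  refine ⟨m, ?_⟩
  -- basic stepping facts
  have hstep : ∀ j : ℕ, σ (c (m + (j : ZMod k))) = c (m + ((j + 1 : ℕ) : ZMod k)) := by
    intro j
    rw [hcyc]
    congr 1
    push_cast
    ring
  have hk1 : ((k - 1 : ℕ) : ZMod k) + 1 = 0 := by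
    have h1 : ((k - 1 : ℕ) : ZMod k) + 1 = (((k - 1) + 1 : ℕ) : ZMod k) := by push_cast; ring
    rw [h1, show (k - 1) + 1 = k from by omega, ZMod.natCast_self]
  have hwrap : σ (c (m + ((k - 1 : ℕ) : ZMod k))) = c m := by
    rw [hcyc, add_assoc, hk1, add_zero]
  have hne : ∀ s t : ℕ, s < k → t < k → s ≠ t →
      c (m + (s : ZMod k)) ≠ c (m + (t : ZMod k)) := by
    intro s t hs ht hst hEq
    exact hst (zmod_natCast_inj hs ht (add_left_cancel (hc hEq)))
  -- the "wrap" element w = c (m + (k-1))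
  have hw0ne : c (m + ((k - 1 : ℕ) : ZMod k)) ≠ c m := by
    have := hne (k - 1) 0 (by omega) (by omega) (by omega)
    simpa using this
  have hWgtA : (c m : ℕ) < (c (m + ((k - 1 : ℕ) : ZMod k)) : ℕ) := by
    have hle := hmin (m + ((k - 1 : ℕ) : ZMod k))
    have hne' : (c (m + ((k - 1 : ℕ) : ZMod k)) : ℕ) ≠ (c m : ℕ) :=
      fun hh => hw0ne (Fin.val_injective hh)
    omega
  have hBw := hB (c (m + ((k - 1 : ℕ) : ZMod k)))
  rw [hwrap] at hBw
  have hBw' : ((c m : ℕ) : ℤ) - ((c (m + ((k - 1 : ℕ) : ZMod k)) : ℕ) : ℤ) ≤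
      x (c (m + ((k - 1 : ℕ) : ZMod k))) - y (c m) := hBw (by exact_mod_cast hWgtA)
  have hsaxw := strictAnti_quant hx (c m) (c (m + ((k - 1 : ℕ) : ZMod k))) hWgtA.le
  -- the successor of m
  have hstep0 : σ (c m) = c (m + ((1 : ℕ) : ZMod k)) := by
    have := hstep 0
    simpa using this
  have hAm := hA (c m)
  rw [hstep0] at hAm
  have hs1ne : c (m + ((1 : ℕ) : ZMod k)) ≠ c m := by
    have := hne 1 0 (by omega) (by omega) (by omega)
    simpa using this
  have hSgtA : (c m : ℕ) < (c (m + ((1 : ℕ) : ZMod k)) : ℕ) := by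
    have hle := hmin (m + ((1 : ℕ) : ZMod k))
    have hne' : (c (m + ((1 : ℕ) : ZMod k)) : ℕ) ≠ (c m : ℕ) :=
      fun hh => hs1ne (Fin.val_injective hh)
    omega
  have hsay1 := strictAnti_quant hy (c m) (c (m + ((1 : ℕ) : ZMod k))) hSgtA.le
  have hy0 : y (c m) = x (c m) := by omega
  have hxw : x (c (m + ((k - 1 : ℕ) : ZMod k))) =
      x (c m) - (((c (m + ((k - 1 : ℕ) : ZMod k)) : ℕ) : ℤ) - ((c m : ℕ) : ℤ)) := by omega
  -- main induction on the position along the cycle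
  have main : ∀ j : ℕ, j < k →
      ((c (m + (j : ZMod k)) : ℕ) = (c m : ℕ) + j ∧
       x (c (m + (j : ZMod k))) = x (c m) - (j : ℤ)) := by
    intro j
    induction j using Nat.strong_induction_on with
    | _ j IH =>
      intro hj
      rcases eq_or_ne j 0 with rfl | hne0
      · constructor <;> simp
      obtain ⟨j', rfl⟩ : ∃ j', j = j' + 1 := ⟨j - 1, by omega⟩
      obtain ⟨hidx', hxv'⟩ := IH j' (by omega) (by omega)
      have hstepj := hstep j'
      have hAj := hA (c (m + (j' : ZMod k)))
      rw [hstepj] at hAj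
      have hlb := hmin (m + ((j' + 1 : ℕ) : ZMod k))
      have hsayj := strictAnti_quant hy (c m) (c (m + ((j' + 1 : ℕ) : ZMod k))) hlb
      have hub : (c (m + ((j' + 1 : ℕ) : ZMod k)) : ℕ) ≤ (c m : ℕ) + (j' + 1) := by omega
      have hexcl : ∀ t : ℕ, t < j' + 1 →
          (c (m + ((j' + 1 : ℕ) : ZMod k)) : ℕ) ≠ (c m : ℕ) + t := by
        intro t ht hEq
        obtain ⟨hidxt, -⟩ := IH t (by omega) (by omega)
        exact hne (j' + 1) t (by omega) (by omega) (by omega)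
          (Fin.val_injective (by rw [hEq, hidxt]))
      have hidx : (c (m + ((j' + 1 : ℕ) : ZMod k)) : ℕ) = (c m : ℕ) + (j' + 1) := by
        by_contra hcon
        exact hexcl ((c (m + ((j' + 1 : ℕ) : ZMod k)) : ℕ) - (c m : ℕ)) (by omega) (by omega)
      refine ⟨hidx, ?_⟩
      by_cases hlast : j' + 1 = k - 1
      · rw [hlast] at hidx ⊢
        omega
      · have hWexcl : ∀ t : ℕ, t ≤ j' + 1 →
            (c (m + ((k - 1 : ℕ) : ZMod k)) : ℕ) ≠ (c m : ℕ) + t := by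
          intro t ht hEq
          have hidxt : (c (m + (t : ZMod k)) : ℕ) = (c m : ℕ) + t := by
            rcases Nat.lt_or_ge t (j' + 1) with h' | h'
            · exact (IH t (by omega) (by omega)).1
            · have ht' : t = j' + 1 := by omega
              rw [ht']
              exact hidx
          exact hne (k - 1) t (by omega) (by omega) (by omega)
            (Fin.val_injective (by rw [hEq, hidxt]))
        have hWlb := hmin (m + ((k - 1 : ℕ) : ZMod k))
        have hWgt : (c m : ℕ) + (j' + 1) < (c (m + ((k - 1 : ℕ) : ZMod k)) : ℕ) := by
          by_contra hcon
          exact hWexcl ((c (m + ((k - 1 : ℕ) : ZMod k)) : ℕ) - (c m : ℕ)) (by omega) (by omega)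
        have hsax1 := strictAnti_quant hx (c m) (c (m + ((j' + 1 : ℕ) : ZMod k))) hlb
        have hsax2 := strictAnti_quant hx (c (m + ((j' + 1 : ℕ) : ZMod k)))
          (c (m + ((k - 1 : ℕ) : ZMod k))) (by omega)
        omega
  -- conclusion
  intro j
  obtain ⟨h1, h2⟩ := main (j : ℕ) j.isLt
  refine ⟨h1, h2, ?_⟩
  rcases Nat.eq_zero_or_pos (j : ℕ) with h0 | hpos
  · rw [h0]
    simpa using hy0
  · obtain ⟨hidx', hxv'⟩ := main ((j : ℕ) - 1) (by omega)
    have hstepj := hstep ((j : ℕ) - 1)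
    rw [show (j : ℕ) - 1 + 1 = (j : ℕ) from by omega] at hstepj
    have hAj := hA (c (m + (((j : ℕ) - 1 : ℕ) : ZMod k)))
    rw [hstepj] at hAj
    have hsayj := strictAnti_quant hy (c m) (c (m + ((j : ℕ) : ZMod k))) (hmin _)
    omega
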